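/- Let A be an associative algebra over a field and h(u), e(u) series with h(u) ∈ 1 + u^{-1}A[[u^{-1}]] invertible, e(u) ∈ u^{-1}A[[u^{-1}]], satisfying (u-v)[e(u),e(v)] = c(e(v)-e(u))^2, (u-v)[e(u),h(v)] = h(v)(e(v)-e(u)), and with a second invertible series g(v) satisfying (u-v)[e(u), g(v)^{-1}] = c' (e(v)-e(u)) g(v)^{-1}. Then for all m ≥ 0: (u-v)[e(u), h(v)(e(v)-e(u))^m g(v)^{-1}] = (cm + 1 + c') h(v)(e(v)-e(u))^{m+1} g(v)^{-1}. -/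

import Mathlib

/-!
With `w := v⁻¹ - u⁻¹` and `s := u⁻¹v⁻¹` central, `D := w ⁅e(u), ·⁆` obeys the Leibniz rule.
The hypotheses say that `D` maps `h(v)`, `e(v) - e(u)` and `g(v)⁻¹` to `s` times the factor with
one more `e(v) - e(u)` attached, with weights `1`, `c` and `c'`. As `s` is central, the weight of
`(e(v) - e(u)) ^ m` is `c m` by induction, and the weights of the three factors of
`h(v) (e(v) - e(u)) ^ m g(v)⁻¹` add up.

A Laurent identity `(u - v) S = T` is encoded as `(v⁻¹ - u⁻¹) S = u⁻¹ v⁻¹ T` in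
`MvPowerSeries (Fin 2) A`.
-/

noncomputable section

/-- The series `Σ_{r} f^{(r)} u^{-r}` viewed in `A[[u⁻¹, v⁻¹]]`, where the first
power-series variable (index `0`) plays the role of `u⁻¹` and the second
(index `1`) the role of `v⁻¹`. -/
def Useries {A : Type*} [Ring A] (f : ℕ → A) : MvPowerSeries (Fin 2) A :=
  fun d => if d 1 = 0 then f (d 0) else 0

/-- The series `Σ_{r} f^{(r)} v^{-r}` viewed in `A[[u⁻¹, v⁻¹]]`. -/
def Vseries {A : Type*} [Ring A] (f : ℕ → A) : MvPowerSeries (Fin 2) A :=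
  fun d => if d 0 = 0 then f (d 1) else 0

/-- `u⁻¹` as an element of `A[[u⁻¹, v⁻¹]]`. -/
def Xu {A : Type*} [Ring A] : MvPowerSeries (Fin 2) A := MvPowerSeries.X 0

/-- `v⁻¹` as an element of `A[[u⁻¹, v⁻¹]]`. -/
def Xv {A : Type*} [Ring A] : MvPowerSeries (Fin 2) A := MvPowerSeries.X 1

section WeightedCommutator

variable {k R : Type*} [CommRing k] [Ring R] [Algebra k R]

theorem Ring.lie_mul_eq_lie_mul_add_mul_lie (a b c : R) :
    ⁅a, b * c⁆ = ⁅a, b⁆ * c + b * ⁅a, c⁆ := by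
  simp only [Ring.lie_def]
  noncomm_ring

theorem mul_lie_pow_of_mul_lie {w s a x : R} {c : k} (hw : Commute w x) (hs : Commute s x)
    (hx : w * ⁅a, x⁆ = c • (s * x ^ 2)) (n : ℕ) :
    w * ⁅a, x ^ n⁆ = (c * n) • (s * x ^ (n + 1)) := by
  induction n with
  | zero => simp [Ring.lie_def]
  | succ n ih =>
    have hxs : x * (s * x ^ (n + 1)) = s * x ^ (n + 2) := by
      rw [← mul_assoc, ← hs.eq, mul_assoc, ← pow_succ']
    calc w * ⁅a, x ^ (n + 1)⁆ = w * ⁅a, x⁆ * x ^ n + x * (w * ⁅a, x ^ n⁆) := by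
          rw [pow_succ', Ring.lie_mul_eq_lie_mul_add_mul_lie, mul_add, ← mul_assoc,
            ← mul_assoc w x, hw.eq, mul_assoc x]
      _ = c • (s * x ^ (n + 2)) + (c * n) • (s * x ^ (n + 2)) := by
          rw [hx, ih, smul_mul_assoc, mul_assoc, ← pow_add, add_comm 2, mul_smul_comm, hxs]
      _ = (c * ↑(n + 1)) • (s * x ^ (n + 1 + 1)) := by
          rw [← add_smul]
          push_cast
          ring_nf

theorem mul_lie_mul_pow_mul {w s a p x r : R} {c c' : k}
    (hwp : Commute w p) (hwx : Commute w x) (hsp : Commute s p) (hsx : Commute s x)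
    (hp : w * ⁅a, p⁆ = s * (p * x)) (hx : w * ⁅a, x⁆ = c • (s * x ^ 2))
    (hr : w * ⁅a, r⁆ = c' • (s * (x * r))) (m : ℕ) :
    w * ⁅a, p * x ^ m * r⁆ = (c * m + 1 + c') • (s * (p * x ^ (m + 1) * r)) := by
  have hwpx : Commute w (p * x ^ m) := hwp.mul_right (hwx.pow_right m)
  have hspx : Commute s (p * x ^ m) := hsp.mul_right (hsx.pow_right m)
  have hp' : w * ⁅a, p⁆ * x ^ m * r = s * (p * x ^ (m + 1) * r) := by
    rw [hp, pow_succ', ← mul_assoc p x, mul_assoc s, mul_assoc s]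
  have hx' : w * (p * ⁅a, x ^ m⁆ * r) = (c * m) • (s * (p * x ^ (m + 1) * r)) := by
    rw [← mul_assoc, ← mul_assoc, hwp.eq, mul_assoc p, mul_lie_pow_of_mul_lie hwx hsx hx,
      mul_smul_comm, smul_mul_assoc, ← mul_assoc p s, ← hsp.eq, mul_assoc s, mul_assoc s]
  have hr' : w * (p * x ^ m * ⁅a, r⁆) = c' • (s * (p * x ^ (m + 1) * r)) := by
    rw [← mul_assoc, hwpx.eq, mul_assoc, hr, mul_smul_comm, ← mul_assoc, ← hspx.eq,
      mul_assoc s, ← mul_assoc (p * x ^ m), mul_assoc p, ← pow_succ]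
  rw [Ring.lie_mul_eq_lie_mul_add_mul_lie, Ring.lie_mul_eq_lie_mul_add_mul_lie, add_mul,
    mul_add, mul_add, ← mul_assoc w, ← mul_assoc w, hp', hx', hr', add_smul, add_smul,
    one_smul]
  abel

end WeightedCommutator

theorem stmt13_general {k A : Type*} [Field k] [Ring A] [Algebra k A]
    (c c' : k) (h e ginv : ℕ → A)
    (hee : (Xv - Xu) * ⁅Useries e, Vseries e⁆ =
      c • (Xu * Xv * (Vseries e - Useries e) ^ 2))
    (heh : (Xv - Xu) * ⁅Useries e, Vseries h⁆ =
      Xu * Xv * (Vseries h * (Vseries e - Useries e)))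
    (heg : (Xv - Xu) * ⁅Useries e, Vseries ginv⁆ =
      c' • (Xu * Xv * ((Vseries e - Useries e) * Vseries ginv)))
    (m : ℕ) :
    (Xv - Xu) * ⁅Useries e, Vseries h * (Vseries e - Useries e) ^ m * Vseries ginv⁆ =
      (c * (m : k) + 1 + c') •
        (Xu * Xv *
          (Vseries h * (Vseries e - Useries e) ^ (m + 1) * Vseries ginv)) := by
  have hw (y : MvPowerSeries (Fin 2) A) : Commute (Xv - Xu) y :=
    ((MvPowerSeries.commute_X y 1).sub_right (MvPowerSeries.commute_X y 0)).symm
  have hs (y : MvPowerSeries (Fin 2) A) : Commute (Xu * Xv) y :=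
    ((MvPowerSeries.commute_X y 0).mul_right (MvPowerSeries.commute_X y 1)).symm
  have hee' : (Xv - Xu) * ⁅Useries e, Vseries e - Useries e⁆ =
      c • (Xu * Xv * (Vseries e - Useries e) ^ 2) := by
    rw [← hee, Ring.lie_def, Ring.lie_def]
    noncomm_ring
  exact mul_lie_mul_pow_mul (hw _) (hw _) (hs _) (hs _) heh hee' heg m

theorem stmt13 {k A : Type*} [Field k] [Ring A] [Algebra k A]
    (c c' : k) (h e g ginv : ℕ → A) (hh0 : h 0 = 1) (he0 : e 0 = 0) (hg0 : g 0 = 1)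
    (hginv1 : Vseries g * Vseries ginv = 1) (hginv2 : Vseries ginv * Vseries g = 1)
    (hee : (Xv - Xu) * ⁅Useries e, Vseries e⁆ =
      c • (Xu * Xv * (Vseries e - Useries e) ^ 2))
    (heh : (Xv - Xu) * ⁅Useries e, Vseries h⁆ =
      Xu * Xv * (Vseries h * (Vseries e - Useries e)))
    (heg : (Xv - Xu) * ⁅Useries e, Vseries ginv⁆ =
      c' • (Xu * Xv * ((Vseries e - Useries e) * Vseries ginv)))
    (m : ℕ) :
    (Xv - Xu) * ⁅Useries e, Vseries h * (Vseries e - Useries e) ^ m * Vseries ginv⁆ =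
      (c * (m : k) + 1 + c') •
        (Xu * Xv *
          (Vseries h * (Vseries e - Useries e) ^ (m + 1) * Vseries ginv)) :=
  stmt13_general c c' h e ginv hee heh heg m
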